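/- arXiv:2303.03489 — 3 statements merged into one kernel-verified Lean document; each statement's English description precedes it below -/
import Mathlib

section
/- Let y : [0,∞) → [0,∞) be locally integrable and K > 0. Suppose that for almost every s ≥ 0 (and for s = 0) and for every t ≥ s one has y(t) ≤ y(s) − K ∫_s^t y(ξ) dξ. Then y(t) ≤ y(0) e^{−K t} for all t ≥ 0. -/
/-!
Let `P n` be the `n`-th partial sum of the exponential series, so that
`K ∫_s^t P n (K (t - ξ)) dξ = P (n + 1) (K (t - s)) - 1`. If `y t * P n (K (t - ξ)) ≤ y ξ` for
a.e. `ξ ≥ s` and all `t ≥ ξ`, integrating over `ξ ∈ [s, t]` and inserting the result into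
`y t + K ∫_s^t y ≤ y s` gives `y t * P (n + 1) (K (t - s)) ≤ y s`. Only almost every `ξ` enters the
integral, so this induction runs over all good starting points at once, `s = 0` included, and
letting `n → ∞` gives `y t * exp (K t) ≤ y 0`.
-/

open MeasureTheory Set Filter Topology
open scoped Nat

noncomputable def expPartialSum (n : ℕ) (x : ℝ) : ℝ :=
  ∑ k ∈ Finset.range (n + 1), x ^ k / k !

theorem tendsto_expPartialSum (x : ℝ) :
    Tendsto (fun n => expPartialSum n x) atTop (𝓝 (Real.exp x)) := by
  have h : HasSum (fun k : ℕ => x ^ k / k !) (Real.exp x) := by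
    rw [Real.exp_eq_exp_ℝ]
    exact NormedSpace.expSeries_div_hasSum_exp x
  exact h.tendsto_sum_nat.comp (tendsto_add_atTop_nat 1)

theorem le_mul_exp_neg_of_forall_mul_expPartialSum_le {a b x : ℝ}
    (h : ∀ n, a * expPartialSum n x ≤ b) : a ≤ b * Real.exp (-x) := by
  have hexp : a * Real.exp x ≤ b :=
    le_of_tendsto ((tendsto_expPartialSum x).const_mul a) (Eventually.of_forall h)
  rwa [Real.exp_neg, ← div_eq_mul_inv, le_div_iff₀ (Real.exp_pos x)]

@[fun_prop]
theorem continuous_expPartialSum (n : ℕ) : Continuous (expPartialSum n) := by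
  unfold expPartialSum
  fun_prop

theorem integral_expPartialSum (n : ℕ) (x : ℝ) :
    ∫ u in (0 : ℝ)..x, expPartialSum n u = expPartialSum (n + 1) x - 1 := by
  unfold expPartialSum
  rw [intervalIntegral.integral_finsetSum fun k _ => by
    apply Continuous.intervalIntegrable; fun_prop]
  rw [Finset.sum_range_succ' _ (n + 1)]
  simp [integral_pow, Nat.factorial_succ, div_div]

theorem mul_integral_expPartialSum_mul_sub (n : ℕ) (K s t : ℝ) :
    K * ∫ ξ in s..t, expPartialSum n (K * (t - ξ)) = expPartialSum (n + 1) (K * (t - s)) - 1 := by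
  simp_rw [mul_sub]
  rw [intervalIntegral.mul_integral_comp_sub_mul, sub_self, integral_expPartialSum]

theorem mul_expPartialSum_succ_le {y : ℝ → ℝ} {K s t : ℝ} {n : ℕ} (hK : 0 ≤ K)
    (hy : LocallyIntegrableOn y (Ici s))
    (hs : ∀ t, s ≤ t → y t ≤ y s - K * ∫ ξ in s..t, y ξ)
    (hn : ∀ᵐ ξ ∂volume.restrict (Ici s),
      ∀ t, ξ ≤ t → y t * expPartialSum n (K * (t - ξ)) ≤ y ξ)
    (hst : s ≤ t) :
    y t * expPartialSum (n + 1) (K * (t - s)) ≤ y s := by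
  have hy_int : IntervalIntegrable y volume s t := by
    rw [intervalIntegrable_iff_integrableOn_Icc_of_le hst]
    exact hy.integrableOn_compact_subset Icc_subset_Ici_self isCompact_Icc
  have hint : ∫ ξ in s..t, y t * expPartialSum n (K * (t - ξ)) ≤ ∫ ξ in s..t, y ξ := by
    refine intervalIntegral.integral_mono_ae_restrict hst
      (Continuous.intervalIntegrable (by fun_prop) s t) hy_int ?_
    filter_upwards [ae_restrict_of_ae_restrict_of_subset Icc_subset_Ici_self hn,
      ae_restrict_mem measurableSet_Icc] with ξ hξ hξt
    exact hξ t hξt.2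
  calc y t * expPartialSum (n + 1) (K * (t - s))
      = y t + K * ∫ ξ in s..t, y t * expPartialSum n (K * (t - ξ)) := by
        rw [intervalIntegral.integral_const_mul, mul_left_comm,
          mul_integral_expPartialSum_mul_sub]
        ring
    _ ≤ y t + K * ∫ ξ in s..t, y ξ := by gcongr
    _ ≤ y s := by linarith [hs t hst]

/-- Gronwall-type integral inequality (Proposition A.1): if a nonnegative
locally integrable function `y` on `[0,∞)` satisfies
`y t ≤ y s - K ∫_s^t y` for a.e. `s ≥ 0` (and for `s = 0`) and all `t ≥ s`,
then `y t ≤ y 0 * exp (-K t)` for all `t ≥ 0`. -/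
theorem gronwall_integral_exponential_decay
    (y : ℝ → ℝ) (hy_nonneg : ∀ t, 0 ≤ y t)
    (hy_loc : LocallyIntegrableOn y (Set.Ici (0 : ℝ)))
    (K : ℝ) (hK : 0 < K)
    (hae : ∀ᵐ s ∂(volume.restrict (Set.Ici (0 : ℝ))),
      ∀ t, s ≤ t → y t ≤ y s - K * ∫ ξ in s..t, y ξ)
    (h0 : ∀ t, (0 : ℝ) ≤ t → y t ≤ y 0 - K * ∫ ξ in (0 : ℝ)..t, y ξ) :
    ∀ t, 0 ≤ t → y t ≤ y 0 * Real.exp (-K * t) := by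
  set good : Set ℝ := {s | 0 ≤ s ∧ ∀ t, s ≤ t → y t ≤ y s - K * ∫ ξ in s..t, y ξ}
  have hgood : ∀ᵐ s ∂volume.restrict (Ici 0), s ∈ good := by
    filter_upwards [hae, ae_restrict_mem measurableSet_Ici] with s hs hs0 using ⟨hs0, hs⟩
  have hbound : ∀ n, ∀ s ∈ good, ∀ t, s ≤ t → y t * expPartialSum n (K * (t - s)) ≤ y s := by
    intro n
    induction n with
    | zero =>
      rintro s ⟨-, hs⟩ t hst
      have hint : 0 ≤ ∫ ξ in s..t, y ξ :=
        intervalIntegral.integral_nonneg hst fun ξ _ => hy_nonneg ξ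
      simpa [expPartialSum] using (hs t hst).trans (sub_le_self _ (mul_nonneg hK.le hint))
    | succ n ih =>
      rintro s ⟨hs0, hs⟩ t hst
      have hsub : Ici s ⊆ Ici 0 := Ici_subset_Ici.2 hs0
      refine mul_expPartialSum_succ_le hK.le (hy_loc.mono_set hsub) hs ?_ hst
      filter_upwards [ae_restrict_of_ae_restrict_of_subset hsub hgood] with ξ hξ using ih ξ hξ
  intro t ht
  rw [neg_mul]
  exact le_mul_exp_neg_of_forall_mul_expPartialSum_le fun n => by
    simpa using hbound n 0 ⟨le_rfl, h0⟩ t ht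
end

section
/- Let Ω ⊂ ℝ³ be a bounded, smooth, connected domain whose boundary is a sphere (or concentric spheres) centered at the origin. Then the kernel of S on H¹_{σ,tan}(Ω) (divergence-free H¹ vector fields tangent to ∂Ω with Sw = 0) is exactly the 3-dimensional space spanned by Y₁(x) = (0, −x₃, x₂), Y₂(x) = (x₃, 0, −x₁), Y₃(x) = (−x₂, x₁, 0). -/
/-!
If the symmetrized gradient of `w` vanishes, the derivative of `w` is skew at every point. Along a
segment `t ↦ y + t (x - y)` the derivative of `w(y + t (x - y)) ⬝ᵥ (x - y)` is then
`Dw (x - y) ⬝ᵥ (x - y) = 0`, so `(w x - w y) ⬝ᵥ (x - y) = 0` on every convex subset.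
Differentiating this identity in `x` and using skewness once more gives
`w x - w y = Dw(x) (x - y)`, so `Dw` is locally constant, hence constant on the connected
domain, and `w x = M x + b` with `M` skew. Tangency at the points of the outer sphere forces
`b = 0`, and a skew `3 × 3` matrix is a combination of the three infinitesimal rotations.
Conversely such a combination is linear with skew matrix, hence divergence free, tangent to
every centered sphere, and in the kernel of `S`.
-/

open Matrix Metric Set Filter Topology

/-- The Jacobian matrix of a vector field on `ℝ³`. -/
noncomputable def jac7 (w : (Fin 3 → ℝ) → (Fin 3 → ℝ)) (x : Fin 3 → ℝ) :
    Fin 3 → Fin 3 → ℝ :=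
  fun i j => fderiv ℝ w x (Pi.single j 1) i

/-- The three rotational vector fields `Y₁, Y₂, Y₃` generating rigid rotations
about the coordinate axes. -/
def Yrot (k : Fin 3) (x : Fin 3 → ℝ) : Fin 3 → ℝ :=
  ![![0, -(x 2), x 1], ![x 2, 0, -(x 0)], ![-(x 1), x 0, 0]] k

theorem HasDerivAt.dotProduct {ι : Type*} [Fintype ι] {f g : ℝ → ι → ℝ} {f' g' : ι → ℝ}
    {t : ℝ} (hf : HasDerivAt f f' t) (hg : HasDerivAt g g' t) :
    HasDerivAt (fun s => f s ⬝ᵥ g s) (f' ⬝ᵥ g t + f t ⬝ᵥ g') t := by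
  have h : HasDerivAt (fun s => ∑ i, f s i * g s i) (∑ i, (f' i * g t i + f t i * g' i)) t :=
    HasDerivAt.fun_sum fun i _ => (hasDerivAt_pi.1 hf i).mul (hasDerivAt_pi.1 hg i)
  exact h.congr_deriv Finset.sum_add_distrib

section KillingField

variable {n : ℕ} {w : (Fin n → ℝ) → Fin n → ℝ} {U : Set (Fin n → ℝ)}

theorem hasDerivAt_comp_line {y c : Fin n → ℝ} {t : ℝ}
    (hw : DifferentiableAt ℝ w (y + t • c)) :
    HasDerivAt (fun s : ℝ => w (y + s • c)) (fderiv ℝ w (y + t • c) c) t :=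
  hw.hasFDerivAt.comp_hasDerivAt t <| by
    simpa using ((hasDerivAt_id t).smul_const c).const_add y

theorem dotProduct_sub_sub_eq_zero_of_skew (hU : Convex ℝ U)
    (hdiff : ∀ x ∈ U, DifferentiableAt ℝ w x)
    (hskew : ∀ x ∈ U, ∀ u v, fderiv ℝ w x u ⬝ᵥ v + fderiv ℝ w x v ⬝ᵥ u = 0)
    {x y : Fin n → ℝ} (hx : x ∈ U) (hy : y ∈ U) : (w x - w y) ⬝ᵥ (x - y) = 0 := by
  set c := x - y
  have hseg : ∀ t ∈ Icc (0 : ℝ) 1, y + t • c ∈ U := fun t ht => hU.add_smul_sub_mem hy hx ht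
  have hderiv : ∀ t ∈ Icc (0 : ℝ) 1, HasDerivAt (fun s : ℝ => w (y + s • c) ⬝ᵥ c) 0 t := by
    intro t ht
    convert (hasDerivAt_comp_line (hdiff _ (hseg t ht))).dotProduct (hasDerivAt_const t c)
      using 1
    linarith [hskew _ (hseg t ht) c c, dotProduct_zero (w (y + t • c))]
  have h10 := constant_of_has_deriv_right_zero
    (fun t ht => (hderiv t ht).continuousAt.continuousWithinAt)
    (fun t ht => (hderiv t (Ico_subset_Icc_self ht)).hasDerivWithinAt) 1
    (right_mem_Icc.2 zero_le_one)
  simp only [c, one_smul, zero_smul, add_zero, add_sub_cancel] at h10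
  rw [sub_dotProduct, h10, sub_self]

theorem sub_eq_fderiv_of_skew (hU : IsOpen U) (hUc : Convex ℝ U)
    (hdiff : ∀ x ∈ U, DifferentiableAt ℝ w x)
    (hskew : ∀ x ∈ U, ∀ u v, fderiv ℝ w x u ⬝ᵥ v + fderiv ℝ w x v ⬝ᵥ u = 0)
    {x y : Fin n → ℝ} (hx : x ∈ U) (hy : y ∈ U) : w x - w y = fderiv ℝ w x (x - y) := by
  suffices ∀ v, (w x - w y) ⬝ᵥ v = fderiv ℝ w x (x - y) ⬝ᵥ v by
    ext k
    simpa using this (Pi.single k 1)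
  intro v
  have hline : ∀ᶠ t in 𝓝 (0 : ℝ), x + t • v ∈ U :=
    (Continuous.continuousAt (by fun_prop)).preimage_mem_nhds (by simpa using hU.mem_nhds hx)
  have hzero : (fun t : ℝ => (w (x + t • v) - w y) ⬝ᵥ (x + t • v - y)) =ᶠ[𝓝 0] fun _ => 0 := by
    filter_upwards [hline] with t ht
    exact dotProduct_sub_sub_eq_zero_of_skew hUc hdiff hskew ht hy
  have hw : HasDerivAt (fun t : ℝ => w (x + t • v) - w y) (fderiv ℝ w x v) 0 := by
    simpa using (hasDerivAt_comp_line (y := x) (c := v) (t := 0)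
      (by simpa using hdiff x hx)).sub_const (w y)
  have hpath : HasDerivAt (fun t : ℝ => x + t • v - y) v 0 := by
    simpa using ((hasDerivAt_id (0 : ℝ)).smul_const v).const_add x |>.sub_const y
  have hderiv : fderiv ℝ w x v ⬝ᵥ (x - y) + (w x - w y) ⬝ᵥ v = 0 := by
    simpa using (hw.dotProduct hpath).unique
      ((hasDerivAt_const (0 : ℝ) (0 : ℝ)).congr_of_eventuallyEq hzero)
  linarith [hskew x hx v (x - y)]

theorem fderiv_eventuallyEq_of_skew (hU : IsOpen U)
    (hdiff : ∀ x ∈ U, DifferentiableAt ℝ w x)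
    (hskew : ∀ x ∈ U, ∀ u v, fderiv ℝ w x u ⬝ᵥ v + fderiv ℝ w x v ⬝ᵥ u = 0)
    {x : Fin n → ℝ} (hx : x ∈ U) : fderiv ℝ w =ᶠ[𝓝 x] fun _ => fderiv ℝ w x := by
  obtain ⟨ε, hε, hball⟩ := Metric.isOpen_iff.1 hU x hx
  set L := fderiv ℝ w x
  have haffine : ∀ z ∈ ball x ε, w z = w x + (L z - L x) := fun z hz => by
    have h := sub_eq_fderiv_of_skew isOpen_ball (convex_ball x ε) (fun z hz => hdiff z (hball hz))
      (fun z hz => hskew z (hball hz)) (mem_ball_self hε) hz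
    rw [map_sub] at h
    linear_combination -h
  filter_upwards [ball_mem_nhds x hε] with z hz
  have hw : w =ᶠ[𝓝 z] fun z' => w x + (L z' - L x) :=
    eventually_of_mem (isOpen_ball.mem_nhds hz) haffine
  exact hw.fderiv_eq.trans ((L.hasFDerivAt.sub_const (L x)).const_add (w x)).fderiv

theorem exists_eqOn_fderiv_add_of_skew (hU : IsOpen U) (hUc : IsPreconnected U)
    (hdiff : ∀ x ∈ U, DifferentiableAt ℝ w x)
    (hskew : ∀ x ∈ U, ∀ u v, fderiv ℝ w x u ⬝ᵥ v + fderiv ℝ w x v ⬝ᵥ u = 0)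
    {x₀ : Fin n → ℝ} (hx₀ : x₀ ∈ U) : ∃ b, EqOn w (fun x => fderiv ℝ w x₀ x + b) U := by
  have hlocal := fun x (hx : x ∈ U) => fderiv_eventuallyEq_of_skew hU hdiff hskew hx
  have hconst : ∀ x ∈ U, fderiv ℝ w x = fderiv ℝ w x₀ := fun x hx =>
    hU.is_const_of_fderiv_eq_zero (𝕜 := ℝ) hUc
      (fun z hz =>
        ((differentiableAt_const _).congr_of_eventuallyEq (hlocal z hz)).differentiableWithinAt)
      (fun z hz => by simp [(hlocal z hz).fderiv_eq]) hx hx₀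
  exact hU.exists_eq_add_of_fderiv_eq hUc (fun x hx => (hdiff x hx).differentiableWithinAt)
    (fderiv ℝ w x₀).differentiable.differentiableOn
    (fun x hx => by rw [hconst x hx, ContinuousLinearMap.fderiv])

end KillingField

section SkewMatrix

variable {ι : Type*} {M : Matrix ι ι ℝ}

theorem Matrix.transpose_eq_neg_iff : Mᵀ = -M ↔ ∀ i j, M i j + M j i = 0 := by
  rw [← Matrix.ext_iff]
  simp only [transpose_apply, neg_apply, eq_neg_iff_add_eq_zero, add_comm]

theorem Matrix.mulVec_dotProduct_add_mulVec_dotProduct [Fintype ι] (hM : Mᵀ = -M)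
    (u v : ι → ℝ) : M *ᵥ u ⬝ᵥ v + M *ᵥ v ⬝ᵥ u = 0 := by
  rw [dotProduct_comm (M *ᵥ u), dotProduct_mulVec, ← mulVec_transpose, hM, neg_mulVec,
    neg_dotProduct, neg_add_cancel]

theorem Matrix.mulVec_dotProduct_self [Fintype ι] (hM : Mᵀ = -M) (u : ι → ℝ) : M *ᵥ u ⬝ᵥ u = 0 := by
  linarith [mulVec_dotProduct_add_mulVec_dotProduct hM u u]

end SkewMatrix

def rotMatrix (α β γ : ℝ) : Matrix (Fin 3) (Fin 3) ℝ :=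
  !![0, -γ, β; γ, 0, -α; -β, α, 0]

theorem rotMatrix_mulVec (α β γ : ℝ) (x : Fin 3 → ℝ) :
    rotMatrix α β γ *ᵥ x = α • Yrot 0 x + β • Yrot 1 x + γ • Yrot 2 x := by
  ext k
  fin_cases k <;> simp [rotMatrix, Yrot, mulVec, dotProduct, Fin.sum_univ_three, add_comm]

theorem rotMatrix_transpose (α β γ : ℝ) : (rotMatrix α β γ)ᵀ = -rotMatrix α β γ := by
  ext i j
  fin_cases i <;> fin_cases j <;> simp [rotMatrix]

theorem eq_rotMatrix_of_transpose_eq_neg {M : Matrix (Fin 3) (Fin 3) ℝ} (hM : Mᵀ = -M) :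
    M = rotMatrix (M 2 1) (M 0 2) (M 1 0) := by
  have h := Matrix.transpose_eq_neg_iff.1 hM
  have hdiag : ∀ i, M i i = 0 := fun i => by linarith [h i i]
  have hanti : ∀ i j, M i j = -M j i := fun i j => by linarith [h i j]
  ext i j
  fin_cases i <;> fin_cases j <;> simp [rotMatrix, hdiag, hanti 0 1, hanti 2 0, hanti 1 2]

theorem fderiv_apply_eq_jac7_mulVec (w : (Fin 3 → ℝ) → Fin 3 → ℝ) (x u : Fin 3 → ℝ) :
    fderiv ℝ w x u = jac7 w x *ᵥ u :=
  (LinearMap.toMatrix'_mulVec (fderiv ℝ w x : (Fin 3 → ℝ) →ₗ[ℝ] Fin 3 → ℝ) u).symm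

theorem jac7_eq_of_eventuallyEq_mulVec {w : (Fin 3 → ℝ) → Fin 3 → ℝ} {x : Fin 3 → ℝ}
    {M : Matrix (Fin 3) (Fin 3) ℝ} (hw : w =ᶠ[𝓝 x] (M *ᵥ ·)) : jac7 w x = M := by
  have h : HasFDerivAt (M *ᵥ ·) (LinearMap.toContinuousLinearMap (Matrix.toLin' M)) x :=
    (LinearMap.toContinuousLinearMap (Matrix.toLin' M)).hasFDerivAt
  ext i j
  simp [jac7, hw.fderiv_eq, h.fderiv]

theorem exists_eq_mulVec_add_of_jac7_skew {Ω : Set (Fin 3 → ℝ)} {w : (Fin 3 → ℝ) → Fin 3 → ℝ}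
    (hΩ : IsOpen Ω) (hΩc : IsPreconnected Ω) (hw_cont : ContinuousOn w (closure Ω))
    (hw_diff : ∀ x ∈ Ω, DifferentiableAt ℝ w x)
    (hsym : ∀ x ∈ Ω, ∀ i j, jac7 w x i j + jac7 w x j i = 0) :
    ∃ (M : Matrix (Fin 3) (Fin 3) ℝ) (b : Fin 3 → ℝ), Mᵀ = -M ∧
      ∀ x ∈ closure Ω, w x = M *ᵥ x + b := by
  obtain rfl | ⟨x₀, hx₀⟩ := Ω.eq_empty_or_nonempty
  · exact ⟨0, 0, by simp, by simp⟩
  have hjac : ∀ x ∈ Ω, (jac7 w x)ᵀ = -jac7 w x := fun x hx => transpose_eq_neg_iff.2 (hsym x hx)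
  obtain ⟨b, hb⟩ := exists_eqOn_fderiv_add_of_skew hΩ hΩc hw_diff (fun x hx u v => by
    simpa only [fderiv_apply_eq_jac7_mulVec] using
      mulVec_dotProduct_add_mulVec_dotProduct (hjac x hx) u v) hx₀
  refine ⟨jac7 w x₀, b, hjac x₀ hx₀, EqOn.of_subset_closure (fun x hx => (hb hx).trans
    (congrArg (· + b) (fderiv_apply_eq_jac7_mulVec w x₀ x))) hw_cont (by fun_prop)
    subset_closure subset_rfl⟩

theorem isPreconnected_setOf_lt_norm_lt {E : Type*} [NormedAddCommGroup E] [NormedSpace ℝ E]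
    (hE : 1 < Module.rank ℝ E) {r₁ r₂ : ℝ} (hr₁ : 0 ≤ r₁) :
    IsPreconnected {y : E | r₁ < ‖y‖ ∧ ‖y‖ < r₂} := by
  have himage : {y : E | r₁ < ‖y‖ ∧ ‖y‖ < r₂} =
      (fun p : E × ℝ => p.2 • p.1) '' (sphere 0 1 ×ˢ Ioo r₁ r₂) := by
    ext y
    simp only [mem_ofPred_eq, mem_image, mem_prod, mem_sphere_zero_iff_norm, mem_Ioo, Prod.exists]
    constructor
    · rintro ⟨hy₁, hy₂⟩
      have hy : ‖y‖ ≠ 0 := (hr₁.trans_lt hy₁).ne'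
      exact ⟨‖y‖⁻¹ • y, ‖y‖, ⟨by simp [norm_smul, hy], hy₁, hy₂⟩, by simp [smul_smul, hy]⟩
    · rintro ⟨s, t, ⟨hs, ht₁, ht₂⟩, rfl⟩
      rw [norm_smul, hs, mul_one, Real.norm_of_nonneg (hr₁.trans ht₁.le)]
      exact ⟨ht₁, ht₂⟩
  rw [himage]
  exact ((isPreconnected_sphere hE 0 1).prod isPreconnected_Ioo).image _
    (continuous_snd.smul continuous_fst).continuousOn

section SumSq

variable {n : ℕ}

theorem setOf_sum_sq_eq_preimage (P : ℝ → Prop) :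
    {x : Fin n → ℝ | P (∑ i, x i ^ 2)} =
      (EuclideanSpace.equiv (Fin n) ℝ).symm ⁻¹' {y | P (‖y‖ ^ 2)} := by
  ext x
  simp [EuclideanSpace.real_norm_sq_eq]

theorem isPreconnected_setOf_sum_sq_lt (r : ℝ) :
    IsPreconnected {x : Fin n → ℝ | ∑ i, x i ^ 2 < r ^ 2} := by
  have hball : {y : EuclideanSpace ℝ (Fin n) | ‖y‖ ^ 2 < r ^ 2} = ball 0 |r| := by
    ext y
    simp [sq_lt_sq]
  rw [setOf_sum_sq_eq_preimage (· < r ^ 2), hball]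
  exact (EuclideanSpace.equiv (Fin n) ℝ).symm.toHomeomorph.isPreconnected_preimage.2
    (convex_ball _ _).isPreconnected

theorem isPreconnected_setOf_lt_sum_sq_lt (hn : 1 < n) (r₁ r₂ : ℝ) :
    IsPreconnected {x : Fin n → ℝ | r₁ ^ 2 < ∑ i, x i ^ 2 ∧ ∑ i, x i ^ 2 < r₂ ^ 2} := by
  have hshell : {y : EuclideanSpace ℝ (Fin n) | r₁ ^ 2 < ‖y‖ ^ 2 ∧ ‖y‖ ^ 2 < r₂ ^ 2} =
      {y | |r₁| < ‖y‖ ∧ ‖y‖ < |r₂|} := by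
    ext y
    simp [sq_lt_sq]
  have hrank : 1 < Module.rank ℝ (EuclideanSpace ℝ (Fin n)) := by
    rw [← Module.finrank_eq_rank, finrank_euclideanSpace_fin]
    exact_mod_cast hn
  rw [setOf_sum_sq_eq_preimage (fun s => r₁ ^ 2 < s ∧ s < r₂ ^ 2), hshell]
  exact (EuclideanSpace.equiv (Fin n) ℝ).symm.toHomeomorph.isPreconnected_preimage.2
    (isPreconnected_setOf_lt_norm_lt hrank (abs_nonneg r₁))

theorem sum_sq_smul (t : ℝ) (p : Fin n → ℝ) : ∑ i, (t • p) i ^ 2 = t ^ 2 * ∑ i, p i ^ 2 := by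
  simp [mul_pow, Finset.mul_sum]

theorem sum_sq_smul_single (r : ℝ) (i : Fin n) :
    ∑ j, (r • Pi.single i 1 : Fin n → ℝ) j ^ 2 = r ^ 2 := by
  rw [sum_sq_smul]
  simp [Pi.single_apply]

theorem mem_closure_setOf_lt_sum_sq_lt {r₁ r₂ : ℝ} (hr₁ : 0 ≤ r₁) (hr : r₁ < r₂)
    {p : Fin n → ℝ} (hp : ∑ i, p i ^ 2 = r₂ ^ 2) :
    p ∈ closure {x : Fin n → ℝ | r₁ ^ 2 < ∑ i, x i ^ 2 ∧ ∑ i, x i ^ 2 < r₂ ^ 2} := by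
  have hr₂ : 0 < r₂ := hr₁.trans_lt hr
  have hlim : Tendsto (· • p) (𝓝[<] (1 : ℝ)) (𝓝 p) := by
    have h : Continuous fun t : ℝ => t • p := by fun_prop
    simpa using (h.tendsto 1).mono_left nhdsWithin_le_nhds
  refine mem_closure_of_tendsto hlim ?_
  filter_upwards [Ioo_mem_nhdsLT ((div_lt_one hr₂).2 hr)] with t ht
  have ht₁ : r₁ < t * r₂ := (div_lt_iff₀ hr₂).1 ht.1
  have ht₂ : t * r₂ < r₂ := by nlinarith [ht.2]
  rw [sum_sq_smul, hp, ← mul_pow]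
  exact ⟨pow_lt_pow_left₀ ht₁ hr₁ two_ne_zero, pow_lt_pow_left₀ ht₂ (by linarith) two_ne_zero⟩

end SumSq

def IsCenteredBallOrShell {n : ℕ} (r₁ r₂ : ℝ) (Ω : Set (Fin n → ℝ)) : Prop :=
  Ω = {x | ∑ i, x i ^ 2 < r₂ ^ 2} ∨ Ω = {x | r₁ ^ 2 < ∑ i, x i ^ 2 ∧ ∑ i, x i ^ 2 < r₂ ^ 2}

namespace IsCenteredBallOrShell

variable {n : ℕ} {r₁ r₂ : ℝ} {Ω : Set (Fin n → ℝ)}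

theorem isOpen (hΩ : IsCenteredBallOrShell r₁ r₂ Ω) : IsOpen Ω := by
  have hcont : Continuous fun x : Fin n → ℝ => ∑ i, x i ^ 2 := by fun_prop
  rcases hΩ with rfl | rfl
  · exact isOpen_lt hcont continuous_const
  · exact (isOpen_lt continuous_const hcont).inter (isOpen_lt hcont continuous_const)

theorem isPreconnected (hΩ : IsCenteredBallOrShell r₁ r₂ Ω) (hn : 1 < n) : IsPreconnected Ω := by
  rcases hΩ with rfl | rfl
  · exact isPreconnected_setOf_sum_sq_lt r₂
  · exact isPreconnected_setOf_lt_sum_sq_lt hn r₁ r₂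

theorem mem_frontier (hΩ : IsCenteredBallOrShell r₁ r₂ Ω) (hr₁ : 0 ≤ r₁) (hr : r₁ < r₂)
    {p : Fin n → ℝ} (hp : ∑ i, p i ^ 2 = r₂ ^ 2) : p ∈ frontier Ω := by
  have hshell := mem_closure_setOf_lt_sum_sq_lt hr₁ hr hp
  rcases hΩ with rfl | rfl
  · exact ⟨closure_mono (fun x hx => hx.2) hshell, fun h => (interior_subset h).ne hp⟩
  · exact ⟨hshell, fun h => (interior_subset h).2.ne hp⟩

end IsCenteredBallOrShell

theorem eq_zero_of_forall_sum_sq_eq_mulVec_add_dotProduct_eq_zero {n : ℕ}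
    {M : Matrix (Fin n) (Fin n) ℝ} (hM : Mᵀ = -M) {b : Fin n → ℝ} {r : ℝ} (hr : r ≠ 0)
    (h : ∀ p, ∑ i, p i ^ 2 = r ^ 2 → (M *ᵥ p + b) ⬝ᵥ p = 0) : b = 0 := by
  ext i
  have hi := h (r • Pi.single i 1) (sum_sq_smul_single r i)
  rw [add_dotProduct, mulVec_dotProduct_self hM, zero_add, dotProduct_smul,
    dotProduct_single, mul_one, smul_eq_mul] at hi
  simpa [hr] using hi

/-- Corollary 7.3 (3) / Section 7: on a ball or spherical shell `Ω` centered at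
the origin, the kernel of the symmetrized gradient `S` among divergence-free
`H¹` vector fields tangent to `∂Ω` is exactly the 3-dimensional space spanned
by `Y₁ x = (0, -x₃, x₂)`, `Y₂ x = (x₃, 0, -x₁)`, `Y₃ x = (-x₂, x₁, 0)`. -/
theorem kerS_sphere_spanned_by_rotations
    (r₁ r₂ : ℝ) (hr₁ : 0 ≤ r₁) (hr : r₁ < r₂) (Ω : Set (Fin 3 → ℝ))
    (hΩ : Ω = {x : Fin 3 → ℝ | ∑ i, (x i) ^ 2 < r₂ ^ 2} ∨
          Ω = {x : Fin 3 → ℝ | r₁ ^ 2 < ∑ i, (x i) ^ 2 ∧ ∑ i, (x i) ^ 2 < r₂ ^ 2})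
    (w : (Fin 3 → ℝ) → (Fin 3 → ℝ))
    (hw_cont : ContinuousOn w (closure Ω))
    (hw_diff : ∀ x ∈ Ω, DifferentiableAt ℝ w x) :
    ((∀ x ∈ Ω, ∑ i, jac7 w x i i = 0) ∧
     (∀ x ∈ frontier Ω, w x ⬝ᵥ x = 0) ∧
     (∀ x ∈ Ω, ∀ i j, jac7 w x i j + jac7 w x j i = 0)) ↔
    (∃ α β γ : ℝ, ∀ x ∈ closure Ω,
      w x = α • Yrot 0 x + β • Yrot 1 x + γ • Yrot 2 x) := by
  have hΩ' : IsCenteredBallOrShell r₁ r₂ Ω := hΩ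
  have hopen := hΩ'.isOpen
  have hsphere : ∀ p, ∑ i, p i ^ 2 = r₂ ^ 2 → p ∈ frontier Ω := fun p => hΩ'.mem_frontier hr₁ hr
  constructor
  · rintro ⟨-, htan, hsym⟩
    obtain ⟨M, b, hM, hwM⟩ := exists_eq_mulVec_add_of_jac7_skew hopen
      (hΩ'.isPreconnected (by norm_num)) hw_cont hw_diff hsym
    have hb0 : b = 0 := eq_zero_of_forall_sum_sq_eq_mulVec_add_dotProduct_eq_zero hM
      (hr₁.trans_lt hr).ne' fun p hp => by
        rw [← hwM p (frontier_subset_closure (hsphere p hp))]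
        exact htan p (hsphere p hp)
    refine ⟨M 2 1, M 0 2, M 1 0, fun x hx => ?_⟩
    rw [hwM x hx, hb0, add_zero, ← rotMatrix_mulVec, ← eq_rotMatrix_of_transpose_eq_neg hM]
  · rintro ⟨α, β, γ, hw⟩
    have hjac : ∀ x ∈ Ω, jac7 w x = rotMatrix α β γ := fun x hx =>
      jac7_eq_of_eventuallyEq_mulVec <| eventually_of_mem (hopen.mem_nhds hx) fun y hy =>
        (hw y (subset_closure hy)).trans (rotMatrix_mulVec α β γ y).symm
    refine ⟨fun x hx => ?_, fun x hx => ?_, fun x hx => ?_⟩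
    · simp [hjac x hx, rotMatrix, Fin.sum_univ_three]
    · rw [hw x (frontier_subset_closure hx), ← rotMatrix_mulVec]
      exact mulVec_dotProduct_self (rotMatrix_transpose α β γ) x
    · rw [hjac x hx]
      exact transpose_eq_neg_iff.1 (rotMatrix_transpose α β γ)
end

section
/- Let u, Φ be smooth vector fields tangent to ∂Ω, and suppose u satisfies the Navier condition [(2Su)n + α u]_tan = 0 on ∂Ω. Then on ∂Ω, Φ · (Du n) = Φ · (dn(u) − α u), where dn is the shape operator of ∂Ω. -/
open Matrix MeasureTheory

noncomputable def grad16 (f : (Fin 3 → ℝ) → ℝ) (x : Fin 3 → ℝ) : Fin 3 → ℝ :=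
  fun i => fderiv ℝ f x (Pi.single i 1)

noncomputable def jac16 (u : (Fin 3 → ℝ) → (Fin 3 → ℝ)) (x : Fin 3 → ℝ) :
    Fin 3 → Fin 3 → ℝ :=
  fun i j => fderiv ℝ u x (Pi.single j 1) i

noncomputable def symJac16 (u : (Fin 3 → ℝ) → (Fin 3 → ℝ)) (x : Fin 3 → ℝ) :
    Fin 3 → Fin 3 → ℝ :=
  fun i j => (jac16 u x i j + jac16 u x j i) / 2

/-- The outward unit normal field `N = ∇f / |∇f|`. -/
noncomputable def unitNormal16 (f : (Fin 3 → ℝ) → ℝ) (x : Fin 3 → ℝ) : Fin 3 → ℝ :=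
  (Real.sqrt (∑ i, (grad16 f x i) ^ 2))⁻¹ • grad16 f x

/-- `(2Su)n + αu` at boundary points. -/
noncomputable def navierField16 (f : (Fin 3 → ℝ) → ℝ) (α : (Fin 3 → ℝ) → ℝ)
    (u : (Fin 3 → ℝ) → (Fin 3 → ℝ)) (x : Fin 3 → ℝ) : Fin 3 → ℝ :=
  (fun i => ∑ j, 2 * symJac16 u x i j * unitNormal16 f x j) + α x • u x

lemma clm_eq_sum16 {F : Type*} [NormedAddCommGroup F] [NormedSpace ℝ F]
    (L : (Fin 3 → ℝ) →L[ℝ] F) (v : Fin 3 → ℝ) :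
    L v = ∑ i, v i • L (Pi.single i 1) := by
  conv_lhs => rw [← Finset.univ_sum_single v]
  rw [map_sum]
  refine Finset.sum_congr rfl fun i _ => ?_
  rw [← L.map_smul]
  congr 1
  ext j
  by_cases h : i = j <;> simp [Pi.single_apply, h]

lemma fderiv_comp_proj16 {φ : (Fin 3 → ℝ) → (Fin 3 → ℝ)} {p : Fin 3 → ℝ}
    (hφ : DifferentiableAt ℝ φ p) (i : Fin 3) (v : Fin 3 → ℝ) :
    fderiv ℝ (fun x => φ x i) p v = fderiv ℝ φ p v i := by
  have h2 : fderiv ℝ (fun x => φ x i) p =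
      (ContinuousLinearMap.proj (R := ℝ) (φ := fun _ : Fin 3 => ℝ) i).comp (fderiv ℝ φ p) :=
    ((ContinuousLinearMap.proj (R := ℝ) (φ := fun _ : Fin 3 => ℝ) i).hasFDerivAt.comp p
      hφ.hasFDerivAt).fderiv
  rw [h2]; rfl

/-- Lemma 2.1: if `u`, `Φ` are smooth vector fields tangent to `∂Ω` and `u`
satisfies the Navier condition `[(2Su)n + αu]_tan = 0` on `∂Ω`, then on `∂Ω`
one has `Φ · (Du n) = Φ · (dn(u) − α u)`, `dn` being the shape operator. -/
theorem navier_boundary_condition_shape_operator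
    (f : (Fin 3 → ℝ) → ℝ) (hf : ContDiff ℝ (⊤ : ℕ∞) f)
    (Ω : Set (Fin 3 → ℝ))
    (hΩ : Ω = f ⁻¹' Set.Iio (0 : ℝ))
    (hfront : frontier Ω = f ⁻¹' {(0 : ℝ)})
    (hgrad : ∀ x ∈ frontier Ω, grad16 f x ≠ 0)
    (α : (Fin 3 → ℝ) → ℝ) (hα : ContinuousOn α (frontier Ω))
    (u Φ : (Fin 3 → ℝ) → (Fin 3 → ℝ))
    (hu : ContDiff ℝ (⊤ : ℕ∞) u) (hΦ : ContDiff ℝ (⊤ : ℕ∞) Φ)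
    (htanu : ∀ x ∈ frontier Ω, u x ⬝ᵥ unitNormal16 f x = 0)
    (htanΦ : ∀ x ∈ frontier Ω, Φ x ⬝ᵥ unitNormal16 f x = 0)
    (hnavier : ∀ x ∈ frontier Ω,
      navierField16 f α u x -
        (navierField16 f α u x ⬝ᵥ unitNormal16 f x) • unitNormal16 f x = 0) :
    ∀ p ∈ frontier Ω,
      Φ p ⬝ᵥ fderiv ℝ u p (unitNormal16 f p) =
        Φ p ⬝ᵥ (fderiv ℝ (unitNormal16 f) p (u p) - α p • u p) := by
  intro p hp
  -- positivity of the gradient norm at boundary points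
  have hqpos : ∀ x ∈ frontier Ω, (0:ℝ) < ∑ i, grad16 f x i ^ 2 := by
    intro x hx
    rcases Function.ne_iff.1 (hgrad x hx) with ⟨i, hi⟩
    exact Finset.sum_pos' (fun j _ => sq_nonneg _) ⟨i, Finset.mem_univ i, lt_of_le_of_ne (sq_nonneg _) (Ne.symm (pow_ne_zero 2 hi))⟩
  have hspos : ∀ x ∈ frontier Ω, (0:ℝ) < Real.sqrt (∑ i, grad16 f x i ^ 2) :=
    fun x hx => Real.sqrt_pos.2 (hqpos x hx)
  set g : Fin 3 → ℝ := grad16 f p with hgdef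
  set c : ℝ := (Real.sqrt (∑ i, grad16 f p i ^ 2))⁻¹ with hcdef
  have hc0 : c ≠ 0 := by rw [hcdef]; exact inv_ne_zero (hspos p hp).ne'
  have hN : unitNormal16 f p = c • g := rfl
  have hfp : f p = 0 := by
    have := hfront ▸ hp; simpa using this
  -- tangency in terms of the gradient
  have tang : ∀ v : Fin 3 → ℝ, (∑ i, v i * (c * g i)) = 0 → ∑ i, v i * g i = 0 := by
    intro v hv
    have h2 : c * ∑ i, v i * g i = 0 := by
      rw [Finset.mul_sum, ← hv]
      exact Finset.sum_congr rfl fun i _ => by ring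
    exact (mul_eq_zero.1 h2).resolve_left hc0
  have hΦg : ∑ i, Φ p i * g i = 0 := by
    refine tang _ ?_
    have h0 := htanΦ p hp
    rw [hN] at h0
    simpa [dotProduct, Pi.smul_apply, smul_eq_mul] using h0
  -- smoothness facts
  have hG' : ∀ i, ContDiff ℝ (⊤ : ℕ∞) (fun x => grad16 f x i) := fun i =>
    (hf.fderiv_right (by simp)).clm_apply contDiff_const
  have hui : ∀ i, ContDiff ℝ (⊤ : ℕ∞) (fun x => u x i) := fun i => contDiff_pi.1 hu i
  have hdu : DifferentiableAt ℝ u p := (hu.differentiable (by simp)) p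
  -- second derivative of f and its symmetry
  set f'' : (Fin 3 → ℝ) →L[ℝ] (Fin 3 → ℝ) →L[ℝ] ℝ := fderiv ℝ (fderiv ℝ f) p with hf''def
  have hsym : ∀ v w, f'' v w = f'' w v :=
    fun v w => (hf.contDiffAt.isSymmSndFDerivAt (by norm_num; show ((2:ℕ∞) : WithTop ℕ∞) ≤ _; exact WithTop.coe_le_coe.2 le_top)) v w
  have hgradd : ∀ i v, fderiv ℝ (fun x => grad16 f x i) p v = f'' v (Pi.single i 1) := by
    intro i v
    have hc : DifferentiableAt ℝ (fderiv ℝ f) p :=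
      ((hf.fderiv_right (m := (⊤ : ℕ∞)) (by simp)).differentiable (by simp)) p
    have h2 : fderiv ℝ (fun x => grad16 f x i) p =
        (fderiv ℝ f p).comp (fderiv ℝ (fun _ => Pi.single i (1:ℝ)) p) +
        (fderiv ℝ (fderiv ℝ f) p).flip (Pi.single i 1) :=
      fderiv_clm_apply (c := fderiv ℝ f) (u := fun _ => Pi.single i 1) hc
        (differentiableAt_const _)
    rw [h2]; simp [hf''def]
  -- components of the derivative of u
  have hDg : ∀ (w : Fin 3 → ℝ) (i : Fin 3), fderiv ℝ u p w i
      = ∑ j, w j * fderiv ℝ u p (Pi.single j 1) i := by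
    intro w i
    rw [clm_eq_sum16 (fderiv ℝ u p) w, Finset.sum_apply]
    exact Finset.sum_congr rfl fun j _ => by simp
  -- the auxiliary function h = ∇f ⋅ u vanishes on the level set of f
  set h : (Fin 3 → ℝ) → ℝ := fun x => ∑ i, grad16 f x i * u x i with hhdef
  have hh : ContDiff ℝ (⊤ : ℕ∞) h := ContDiff.sum fun i _ => (hG' i).mul (hui i)
  have hzero : ∀ x ∈ {x | f x = f p}, h x = 0 := by
    intro x hx
    have hxf : x ∈ frontier Ω := by
      rw [hfront]; simpa [hfp] using hx
    have h0 := htanu x hxf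
    rw [show unitNormal16 f x = (Real.sqrt (∑ i, grad16 f x i ^ 2))⁻¹ • grad16 f x from rfl]
      at h0
    simp only [dotProduct, Pi.smul_apply, smul_eq_mul] at h0
    have h2 : (Real.sqrt (∑ i, grad16 f x i ^ 2))⁻¹ * ∑ i, u x i * grad16 f x i = 0 := by
      rw [Finset.mul_sum, ← h0]
      exact Finset.sum_congr rfl fun i _ => by ring
    have h3 := (mul_eq_zero.1 h2).resolve_left (inv_ne_zero (hspos x hxf).ne')
    show ∑ i, grad16 f x i * u x i = 0
    rw [← h3]
    exact Finset.sum_congr rfl fun i _ => by ring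
  -- Lagrange multipliers: the derivative of h kills tangent vectors
  have hextr : IsLocalExtrOn h {x | f x = f p} p := by
    refine Or.inl ?_
    have hev : ∀ᶠ x in nhdsWithin p {x | f x = f p}, h x = 0 :=
      eventually_nhdsWithin_of_forall hzero
    filter_upwards [hev] with x hx
    rw [hx, hzero p (by simp)]
  obtain ⟨a, b, hab, hmul⟩ := hextr.exists_multipliers_of_hasStrictFDerivAt_1d
    (hf.hasStrictFDerivAt (by simp)) (hh.hasStrictFDerivAt (by simp))
  have hb : b ≠ 0 := by
    intro hb0
    have ha : a ≠ 0 := by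
      intro ha0; exact hab (by simp [ha0, hb0, Prod.ext_iff])
    have hF : fderiv ℝ f p = 0 := by
      have h1 : a • fderiv ℝ f p = 0 := by
        have h2 := hmul; rw [hb0] at h2; simpa using h2
      exact (smul_eq_zero.1 h1).resolve_left ha
    apply hgrad p hp
    funext i
    show fderiv ℝ f p (Pi.single i 1) = 0
    rw [hF]; rfl
  have hfΦ : fderiv ℝ f p (Φ p) = 0 := by
    rw [clm_eq_sum16]
    exact hΦg
  have hhΦ : fderiv ℝ h p (Φ p) = 0 := by
    have h1 := DFunLike.congr_fun hmul (Φ p)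
    simp only [ContinuousLinearMap.add_apply, ContinuousLinearMap.smul_apply,
      ContinuousLinearMap.zero_apply, smul_eq_mul, hfΦ, mul_zero, zero_add] at h1
    exact (mul_eq_zero.1 h1).resolve_left hb
  -- expansion of the derivative of h
  have hfderiv_h : ∀ v, fderiv ℝ h p v =
      ∑ i, (g i * fderiv ℝ u p v i + u p i * f'' v (Pi.single i 1)) := by
    intro v
    have hdsum : fderiv ℝ h p = ∑ i, fderiv ℝ (fun x => grad16 f x i * u x i) p :=
      fderiv_fun_sum fun i _ =>
        (((hG' i).differentiable (by simp)) p).mul (((hui i).differentiable (by simp)) p)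
    rw [hdsum, ContinuousLinearMap.sum_apply]
    refine Finset.sum_congr rfl fun i _ => ?_
    rw [fderiv_fun_mul (((hG' i).differentiable (by simp)) p) (((hui i).differentiable (by simp)) p)]
    simp only [ContinuousLinearMap.add_apply, ContinuousLinearMap.smul_apply, smul_eq_mul]
    rw [hgradd i v, fderiv_comp_proj16 hdu i v]
  -- the main scalar quantities
  set P : ℝ := ∑ i, Φ p i * fderiv ℝ u p g i with hPdef
  set B : ℝ := ∑ j, g j * fderiv ℝ u p (Φ p) j with hBdef
  set T : ℝ := ∑ i, u p i * f'' (Φ p) (Pi.single i 1) with hTdef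
  set T' : ℝ := ∑ i, Φ p i * f'' (u p) (Pi.single i 1) with hT'def
  set d : ℝ := fderiv ℝ (fun x => (Real.sqrt (∑ i, grad16 f x i ^ 2))⁻¹) p (u p) with hddef
  -- F3 : B + T = 0 (Lagrange)
  have F3 : B + T = 0 := by
    have h1 := hfderiv_h (Φ p)
    rw [hhΦ] at h1
    rw [hBdef, hTdef, ← Finset.sum_add_distrib]
    exact h1.symm
  -- F4 : T = T' (symmetry of the second derivative)
  have F4 : T = T' := by
    have e1 : T = ∑ i, ∑ j, u p i * Φ p j * f'' (Pi.single i 1) (Pi.single j 1) := by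
      refine Finset.sum_congr rfl fun i _ => ?_
      rw [hsym (Φ p) (Pi.single i 1), clm_eq_sum16 (f'' (Pi.single i 1)) (Φ p),
        Finset.mul_sum]
      exact Finset.sum_congr rfl fun j _ => by rw [smul_eq_mul]; ring
    have e2 : T' = ∑ i, ∑ j, Φ p i * u p j * f'' (Pi.single i 1) (Pi.single j 1) := by
      refine Finset.sum_congr rfl fun i _ => ?_
      rw [hsym (u p) (Pi.single i 1), clm_eq_sum16 (f'' (Pi.single i 1)) (u p),
        Finset.mul_sum]
      exact Finset.sum_congr rfl fun j _ => by rw [smul_eq_mul]; ring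
    rw [e1, e2, Finset.sum_comm]
    refine Finset.sum_congr rfl fun i _ => Finset.sum_congr rfl fun j _ => ?_
    rw [hsym (Pi.single j 1) (Pi.single i 1)]
    ring
  -- F2 : Navier condition paired with Φ
  have h0 : ∑ i, Φ p i * navierField16 f α u p i = 0 := by
    have heq : navierField16 f α u p =
        (navierField16 f α u p ⬝ᵥ unitNormal16 f p) • unitNormal16 f p :=
      sub_eq_zero.1 (hnavier p hp)
    set dot : ℝ := navierField16 f α u p ⬝ᵥ unitNormal16 f p with hdot
    calc ∑ i, Φ p i * navierField16 f α u p i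
        = ∑ i, Φ p i * (dot * (c * g i)) := by
          refine Finset.sum_congr rfl fun i _ => ?_
          rw [heq, hN]
          simp [Pi.smul_apply, smul_eq_mul, mul_assoc]
      _ = dot * c * ∑ i, Φ p i * g i := by
          rw [Finset.mul_sum]
          exact Finset.sum_congr rfl fun i _ => by ring
      _ = 0 := by rw [hΦg, mul_zero]
  have h1 : ∑ i, Φ p i * navierField16 f α u p i
      = c * P + c * B + α p * ∑ i, Φ p i * u p i := by
    have e1 : c * P = ∑ i, ∑ j, c * Φ p i * g j * fderiv ℝ u p (Pi.single j 1) i := by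
      rw [hPdef, Finset.mul_sum]
      refine Finset.sum_congr rfl fun i _ => ?_
      rw [hDg g i, Finset.mul_sum, Finset.mul_sum]
      exact Finset.sum_congr rfl fun j _ => by ring
    have e2 : c * B = ∑ i, ∑ j, c * Φ p i * g j * fderiv ℝ u p (Pi.single i 1) j := by
      rw [hBdef, Finset.mul_sum]
      conv_rhs => rw [Finset.sum_comm]
      refine Finset.sum_congr rfl fun j _ => ?_
      rw [hDg (Φ p) j, Finset.mul_sum, Finset.mul_sum]
      exact Finset.sum_congr rfl fun i _ => by ring
    rw [e1, e2]
    simp only [navierField16, symJac16, jac16, Pi.add_apply, Pi.smul_apply, smul_eq_mul, hN]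
    rw [Finset.mul_sum, ← Finset.sum_add_distrib, ← Finset.sum_add_distrib]
    refine Finset.sum_congr rfl fun i _ => ?_
    rw [mul_add, Finset.mul_sum, ← Finset.sum_add_distrib]
    congr 1
    · refine Finset.sum_congr rfl fun j _ => ?_
      ring
    · ring
  have F2 : c * P + c * B + α p * ∑ i, Φ p i * u p i = 0 := by
    rw [← h1]; exact h0
  -- derivative of the unit normal
  have hGdiff : DifferentiableAt ℝ (grad16 f) p :=
    differentiableAt_pi.2 fun i => ((hG' i).differentiable (by simp)) p
  have hq : ContDiff ℝ (⊤ : ℕ∞) (fun x => ∑ i, grad16 f x i ^ 2) :=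
    ContDiff.sum fun i _ => (hG' i).pow 2
  have hSdiff : DifferentiableAt ℝ (fun x => Real.sqrt (∑ i, grad16 f x i ^ 2)) p :=
    ((hq.differentiable (by simp)) p).sqrt (hqpos p hp).ne'
  have hSinv : DifferentiableAt ℝ (fun x => (Real.sqrt (∑ i, grad16 f x i ^ 2))⁻¹) p :=
    hSdiff.inv (hspos p hp).ne'
  have hfd : fderiv ℝ (unitNormal16 f) p
      = (Real.sqrt (∑ i, grad16 f p i ^ 2))⁻¹ • fderiv ℝ (grad16 f) p
        + (fderiv ℝ (fun x => (Real.sqrt (∑ i, grad16 f x i ^ 2))⁻¹) p).smulRight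
            (grad16 f p) :=
    fderiv_smul hSinv hGdiff
  have hDNi : ∀ i, fderiv ℝ (unitNormal16 f) p (u p) i
      = c * f'' (u p) (Pi.single i 1) + d * g i := by
    intro i
    rw [hfd]
    simp only [ContinuousLinearMap.add_apply, ContinuousLinearMap.coe_smul',
      ContinuousLinearMap.smulRight_apply, Pi.add_apply, Pi.smul_apply, smul_eq_mul]
    have h2 : fderiv ℝ (grad16 f) p (u p) i = f'' (u p) (Pi.single i 1) := by
      rw [← fderiv_comp_proj16 hGdiff i (u p)]
      exact hgradd i (u p)
    rw [h2, ← hcdef, ← hddef]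
  -- put everything together
  simp only [dotProduct, Pi.sub_apply, Pi.smul_apply, smul_eq_mul]
  have F1 : ∑ i, Φ p i * fderiv ℝ u p (unitNormal16 f p) i = c * P := by
    rw [hN, (fderiv ℝ u p).map_smul, hPdef, Finset.mul_sum]
    exact Finset.sum_congr rfl fun i _ => by
      rw [Pi.smul_apply, smul_eq_mul]; ring
  have F5 : ∑ i, Φ p i * (fderiv ℝ (unitNormal16 f) p (u p) i - α p * u p i)
      = c * T' + d * (∑ i, Φ p i * g i) - α p * ∑ i, Φ p i * u p i := by
    rw [hT'def, Finset.mul_sum, Finset.mul_sum, Finset.mul_sum,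
      ← Finset.sum_add_distrib, ← Finset.sum_sub_distrib]
    refine Finset.sum_congr rfl fun i _ => ?_
    rw [hDNi i]
    ring
  rw [F1, F5, hΦg]
  linear_combination F2 - c * F3 + c * F4
end
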